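/- For every integer n ≥ 1, the rank generating function of the order ideals of P_n({b,g}) equals the Carlitz–Riordan q-Catalan polynomial: F(J(P_n({b,g})),q) = C_n(q), as polynomials in ℤ[q]. -/

import Mathlib

open scoped Classical

noncomputable section

/-- `W2 n` is the set `{(a,b) ∈ ℤ≥0² : a + b ≤ n - 2}`. -/
def W2 (n : ℕ) : Finset (ℤ × ℤ) :=
  (Finset.Icc (0:ℤ) (n:ℤ) ×ˢ Finset.Icc (0:ℤ) (n:ℤ)).filter
    (fun p => p.1 + p.2 ≤ (n:ℤ) - 2)

/-- One step: add a vector of `S`, staying inside `W`. -/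
def step2 (S : Set (ℤ × ℤ)) (W : Finset (ℤ × ℤ)) (u v : ℤ × ℤ) : Prop :=
  u ∈ W ∧ v ∈ W ∧ ∃ e ∈ S, v = u + e

/-- The order relation: reflexive-transitive closure of `step2`, restricted to `W`. -/
def le2 (S : Set (ℤ × ℤ)) (W : Finset (ℤ × ℤ)) (u v : ℤ × ℤ) : Prop :=
  u ∈ W ∧ v ∈ W ∧ Relation.ReflTransGen (step2 S W) u v

/-- An order ideal: a downward closed subset of `W`. -/
def IsIdeal2 (S : Set (ℤ × ℤ)) (W : Finset (ℤ × ℤ)) (I : Finset (ℤ × ℤ)) : Prop :=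
  I ⊆ W ∧ ∀ u v : ℤ × ℤ, le2 S W u v → v ∈ I → u ∈ I

/-- The set of all order ideals. -/
def ideals2 (S : Set (ℤ × ℤ)) (W : Finset (ℤ × ℤ)) : Finset (Finset (ℤ × ℤ)) :=
  W.powerset.filter (fun I => IsIdeal2 S W I)

/-- The step vectors of the poset `P_n`: r = (1,0), g = (0,1), b = (-1,1). -/
def Pvec : Set (ℤ × ℤ) := {(1,0), (0,1), (-1,1)}

/-- The step vectors of the poset `P_n({b,g})`: g = (0,1), b = (-1,1). -/
def BGvec : Set (ℤ × ℤ) := {(0,1), (-1,1)}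

/-- The rank generating function `F(J(P),q) = Σ_{I ∈ J(P)} q^{|I|}`. -/
def genF2 (S : Set (ℤ × ℤ)) (W : Finset (ℤ × ℤ)) : Polynomial ℤ :=
  ∑ I ∈ ideals2 S W, Polynomial.X ^ I.card

/-- The Carlitz–Riordan q-Catalan polynomials: `C 0 = 1` and, for `n ≥ 1`,
`C n = Σ_{k=1}^{n} q^{k-1} C (k-1) C (n-k)` (written below with `k` shifted by one). -/
def qCat : ℕ → Polynomial ℤ
  | 0 => 1
  | n + 1 => ∑ k ∈ (Finset.range (n+1)).attach,
      Polynomial.X ^ (k : ℕ) * qCat k * qCat (n - (k : ℕ))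
  decreasing_by
  · exact Finset.mem_range.mp k.2
  · exact Nat.lt_succ_of_le (Nat.sub_le n k)

end

open Finset Polynomial Relation

lemma mem_W2 {m : ℕ} {p : ℤ × ℤ} :
    p ∈ W2 m ↔ 0 ≤ p.1 ∧ 0 ≤ p.2 ∧ p.1 + p.2 ≤ (m:ℤ) - 2 := by
  simp only [W2, Finset.mem_filter, Finset.mem_product, Finset.mem_Icc]
  omega

lemma reach {m : ℕ} : ∀ (d : ℕ) (u v : ℤ × ℤ), u ∈ W2 m → v ∈ W2 m → v.1 ≤ u.1 →
    u.1 + u.2 ≤ v.1 + v.2 → v.2 - u.2 ≤ (d:ℤ) →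
    Relation.ReflTransGen (step2 BGvec (W2 m)) u v := by
  intro d
  induction d with
  | zero =>
    intro u v hu hv h1 h2 h3
    have hu' := mem_W2.mp hu; have hv' := mem_W2.mp hv
    have : u = v := by
      obtain ⟨a, b⟩ := u; obtain ⟨c, e⟩ := v
      simp only [Prod.mk.injEq]
      simp only at h1 h2 h3 hu' hv'
      omega
    rw [this]
  | succ d ih =>
    intro u v hu hv h1 h2 h3
    have hu' := mem_W2.mp hu; have hv' := mem_W2.mp hv
    by_cases hc : u = v
    · rw [hc]
    · by_cases ha : v.1 < u.1
      · have hw : ((u.1 - 1, u.2 + 1) : ℤ × ℤ) ∈ W2 m := mem_W2.mpr (by simp; omega)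
        refine Relation.ReflTransGen.head ⟨hu, hw, (-1,1), by simp [BGvec], ?_⟩
          (ih (u.1 - 1, u.2 + 1) v hw hv (by simp; omega) (by simp; omega) (by simp; omega))
        simp [Prod.ext_iff]; omega
      · have ha' : v.1 = u.1 := le_antisymm h1 (not_lt.mp ha)
        have hne : u.2 < v.2 := by
          rcases lt_or_eq_of_le (by omega : u.2 ≤ v.2) with h | h
          · exact h
          · exact absurd (Prod.ext ha'.symm h) hc
        have hw : ((u.1, u.2 + 1) : ℤ × ℤ) ∈ W2 m := mem_W2.mpr (by simp; omega)
        refine Relation.ReflTransGen.head ⟨hu, hw, (0,1), by simp [BGvec], ?_⟩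
          (ih (u.1, u.2 + 1) v hw hv (by simp; omega) (by simp; omega) (by simp; omega))
        simp [Prod.ext_iff]

lemma le2_char {m : ℕ} {u v : ℤ × ℤ} :
    le2 BGvec (W2 m) u v ↔
      u ∈ W2 m ∧ v ∈ W2 m ∧ v.1 ≤ u.1 ∧ u.1 + u.2 ≤ v.1 + v.2 := by
  constructor
  · rintro ⟨hu, hv, hr⟩
    refine ⟨hu, hv, ?_⟩
    induction hr with
    | refl => omega
    | tail h1 h2 ih =>
      obtain ⟨hw, hw', e, he, rfl⟩ := h2
      obtain ⟨ih1, ih2⟩ := ih hw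
      simp only [BGvec, Set.mem_insert_iff, Set.mem_singleton_iff] at he
      rcases he with rfl | rfl <;> simp <;> omega
  · rintro ⟨hu, hv, h1, h2⟩
    exact ⟨hu, hv, reach (v.2 - u.2).toNat u v hu hv h1 h2 (by omega)⟩

lemma mem_ideals2 {S : Set (ℤ × ℤ)} {W : Finset (ℤ × ℤ)} {I : Finset (ℤ × ℤ)} :
    I ∈ ideals2 S W ↔ IsIdeal2 S W I := by
  simp only [ideals2, Finset.mem_filter, Finset.mem_powerset, IsIdeal2]
  exact ⟨fun h => ((Finset.mem_filter (p := fun I => IsIdeal2 S W I)).mp h).2,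
    fun h => (Finset.mem_filter (p := fun I => IsIdeal2 S W I)).mpr ⟨Finset.mem_powerset.mpr h.1, h⟩⟩

lemma mem_W2_mk {m : ℕ} {a b : ℤ} :
    ((a, b) : ℤ × ℤ) ∈ W2 m ↔ 0 ≤ a ∧ 0 ≤ b ∧ a + b ≤ (m:ℤ) - 2 := mem_W2

lemma le2_mk {m : ℕ} {a b c d : ℤ} (h1 : ((a,b) : ℤ × ℤ) ∈ W2 m)
    (h2 : ((c,d) : ℤ × ℤ) ∈ W2 m) (h3 : c ≤ a) (h4 : a + b ≤ c + d) :
    le2 BGvec (W2 m) (a,b) (c,d) := le2_char.mpr ⟨h1, h2, h3, h4⟩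

noncomputable section

def upI (I : Finset (ℤ × ℤ)) : Finset (ℤ × ℤ) := I.image fun p => (p.1, p.2 + 1)

def rightI (k : ℕ) (I : Finset (ℤ × ℤ)) : Finset (ℤ × ℤ) :=
  I.image fun p => (p.1 + (k:ℤ) + 1, p.2)

def rowI (k : ℕ) : Finset (ℤ × ℤ) := (Finset.range k).image fun s : ℕ => ((s:ℤ), 0)

def PhiI (k : ℕ) (I₁ I₂ : Finset (ℤ × ℤ)) : Finset (ℤ × ℤ) :=
  rowI k ∪ upI I₁ ∪ rightI k I₂

def kOf (I : Finset (ℤ × ℤ)) : ℕ := sInf {s : ℕ | ((s:ℤ), 0) ∉ I}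

def lowOf (I : Finset (ℤ × ℤ)) (k : ℕ) : Finset (ℤ × ℤ) :=
  (I.filter fun p => 1 ≤ p.2 ∧ p.1 + p.2 < (k:ℤ)).image fun p => (p.1, p.2 - 1)

def highOf (I : Finset (ℤ × ℤ)) (k : ℕ) : Finset (ℤ × ℤ) :=
  (I.filter fun p => (k:ℤ) < p.1).image fun p => (p.1 - (k:ℤ) - 1, p.2)

end

lemma mem_PhiI {k : ℕ} {I₁ I₂ : Finset (ℤ × ℤ)} {a b : ℤ} :
    (a, b) ∈ PhiI k I₁ I₂ ↔ (0 ≤ a ∧ a < (k:ℤ) ∧ b = 0) ∨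
      (∃ q ∈ I₁, a = q.1 ∧ b = q.2 + 1) ∨
      (∃ q ∈ I₂, a = q.1 + (k:ℤ) + 1 ∧ b = q.2) := by
  unfold PhiI rowI upI rightI
  rw [Finset.mem_union, Finset.mem_union, Finset.mem_image, Finset.mem_image,
    Finset.mem_image]
  constructor
  · rintro ((⟨s, hs, hp⟩ | ⟨q, hq, hp⟩) | ⟨q, hq, hp⟩) <;> rw [Prod.mk.injEq] at hp
    · obtain ⟨rfl, rfl⟩ := hp
      exact Or.inl ⟨Int.natCast_nonneg s, by exact_mod_cast Finset.mem_range.mp hs, rfl⟩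
    · exact Or.inr (Or.inl ⟨q, hq, hp.1.symm, hp.2.symm⟩)
    · exact Or.inr (Or.inr ⟨q, hq, hp.1.symm, hp.2.symm⟩)
  · rintro (⟨h1, h2, rfl⟩ | ⟨q, hq, rfl, rfl⟩ | ⟨q, hq, rfl, rfl⟩)
    · exact Or.inl (Or.inl ⟨a.toNat, Finset.mem_range.mpr (by omega),
        by rw [Prod.mk.injEq]; omega⟩)
    · exact Or.inl (Or.inr ⟨q, hq, rfl⟩)
    · exact Or.inr ⟨q, hq, rfl⟩

lemma phi_isIdeal {n k : ℕ} (hk : k ≤ n) {I₁ I₂ : Finset (ℤ × ℤ)}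
    (h₁ : IsIdeal2 BGvec (W2 k) I₁) (h₂ : IsIdeal2 BGvec (W2 (n - k)) I₂) :
    IsIdeal2 BGvec (W2 (n + 1)) (PhiI k I₁ I₂) := by
  constructor
  · rintro ⟨a, b⟩ hp
    rw [mem_PhiI] at hp
    rcases hp with ⟨h1, h2, h3⟩ | ⟨⟨q1, q2⟩, hq, rfl, rfl⟩ | ⟨⟨q1, q2⟩, hq, rfl, rfl⟩
    · exact mem_W2_mk.mpr ⟨h1, by omega, by push_cast; omega⟩
    · have := mem_W2_mk.mp (h₁.1 hq)
      exact mem_W2_mk.mpr ⟨by omega, by omega, by push_cast; omega⟩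
    · have := mem_W2_mk.mp (h₂.1 hq)
      exact mem_W2_mk.mpr ⟨by omega, by omega, by push_cast at this ⊢; omega⟩
  · rintro ⟨u1, u2⟩ ⟨v1, v2⟩ hle hv
    obtain ⟨hu, hvW, h1, h2⟩ := le2_char.mp hle
    simp only at h1 h2
    have huW := mem_W2_mk.mp hu
    rw [mem_PhiI] at hv ⊢
    rcases hv with ⟨g1, g2, g3⟩ | ⟨⟨q1, q2⟩, hq, h3, h4⟩ | ⟨⟨q1, q2⟩, hq, h3, h4⟩
    · exact Or.inl ⟨huW.1, by omega, by omega⟩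
    · simp only at h3 h4
      have hqW := mem_W2_mk.mp (h₁.1 hq)
      by_cases hb : u2 = 0
      · exact Or.inl ⟨huW.1, by omega, hb⟩
      · exact Or.inr (Or.inl ⟨(u1, u2 - 1), h₁.2 (u1, u2 - 1) (q1, q2)
          (le2_mk (mem_W2_mk.mpr ⟨by omega, by omega, by omega⟩) (h₁.1 hq)
            (by omega) (by omega)) hq, rfl, by show u2 = u2 - 1 + 1; omega⟩)
    · simp only at h3 h4
      have hqW := mem_W2_mk.mp (h₂.1 hq)
      exact Or.inr (Or.inr ⟨(u1 - (k:ℤ) - 1, u2), h₂.2 (u1 - (k:ℤ) - 1, u2) (q1, q2)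
        (le2_mk (mem_W2_mk.mpr ⟨by omega, by omega, by omega⟩)
          (h₂.1 hq) (by omega) (by omega)) hq,
        by show u1 = u1 - (k:ℤ) - 1 + (k:ℤ) + 1; omega, rfl⟩)

lemma phi_card {n k : ℕ} {I₁ I₂ : Finset (ℤ × ℤ)} (h₁ : I₁ ⊆ W2 k) (h₂ : I₂ ⊆ W2 (n - k)) :
    (PhiI k I₁ I₂).card = k + I₁.card + I₂.card := by
  have inj1 : Function.Injective (fun p : ℤ × ℤ => (p.1, p.2 + 1)) := by
    intro p q h
    rw [Prod.mk.injEq] at h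
    exact Prod.ext h.1 (by omega)
  have inj2 : Function.Injective (fun p : ℤ × ℤ => (p.1 + (k:ℤ) + 1, p.2)) := by
    intro p q h
    rw [Prod.mk.injEq] at h
    exact Prod.ext (by omega) h.2
  have inj0 : Function.Injective (fun s : ℕ => (((s:ℤ), 0) : ℤ × ℤ)) := by
    intro p q h
    rw [Prod.mk.injEq] at h
    exact_mod_cast h.1
  have d1 : Disjoint (rowI k) (upI I₁) := by
    rw [Finset.disjoint_left]
    rintro ⟨a, b⟩ h h'
    unfold rowI at h
    unfold upI at h'
    rw [Finset.mem_image] at h h'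
    obtain ⟨s, _, hs⟩ := h
    obtain ⟨⟨q1, q2⟩, hq, hq'⟩ := h'
    rw [Prod.mk.injEq] at hs hq'
    simp only at hq'
    have := mem_W2_mk.mp (h₁ hq)
    omega
  have d2 : Disjoint (rowI k ∪ upI I₁) (rightI k I₂) := by
    rw [Finset.disjoint_left]
    rintro ⟨a, b⟩ h h'
    rw [Finset.mem_union] at h
    unfold rowI upI at h
    unfold rightI at h'
    rw [Finset.mem_image] at h'
    obtain ⟨⟨q1, q2⟩, hq, hq'⟩ := h'
    rw [Prod.mk.injEq] at hq'
    simp only at hq'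
    have hqW := mem_W2_mk.mp (h₂ hq)
    rcases h with h | h <;> rw [Finset.mem_image] at h
    · obtain ⟨s, hs, he⟩ := h
      rw [Finset.mem_range] at hs
      rw [Prod.mk.injEq] at he
      omega
    · obtain ⟨⟨r1, r2⟩, hr, he⟩ := h
      rw [Prod.mk.injEq] at he
      simp only at he
      have hrW := mem_W2_mk.mp (h₁ hr)
      omega
  rw [PhiI, Finset.card_union_of_disjoint d2, Finset.card_union_of_disjoint d1,
    rowI, upI, rightI, Finset.card_image_of_injective _ inj0,
    Finset.card_image_of_injective _ inj1, Finset.card_image_of_injective _ inj2,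
    Finset.card_range]

lemma kOf_eq {I : Finset (ℤ × ℤ)} {k : ℕ} (h1 : ((k:ℤ), 0) ∉ I)
    (h2 : ∀ s : ℕ, s < k → ((s:ℤ), 0) ∈ I) : kOf I = k := by
  have hne : {s : ℕ | ((s:ℤ), 0) ∉ I}.Nonempty := ⟨k, h1⟩
  have hmem := Nat.sInf_mem hne
  simp only [Set.mem_setOf_eq] at hmem
  have hle : kOf I ≤ k := Nat.sInf_le h1
  rcases Nat.lt_or_ge (kOf I) k with h | h
  · exact absurd (h2 _ h) hmem
  · omega

lemma kOf_phi {n k : ℕ} {I₁ I₂ : Finset (ℤ × ℤ)} (h₁ : I₁ ⊆ W2 k) (h₂ : I₂ ⊆ W2 (n - k)) :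
    kOf (PhiI k I₁ I₂) = k := by
  apply kOf_eq
  · rw [mem_PhiI]
    rintro (⟨_, h, _⟩ | ⟨⟨q1, q2⟩, hq, h3, h4⟩ | ⟨⟨q1, q2⟩, hq, h3, h4⟩)
    · omega
    · simp only at h3 h4
      have := mem_W2_mk.mp (h₁ hq)
      omega
    · simp only at h3 h4
      have := mem_W2_mk.mp (h₂ hq)
      omega
  · intro s hs
    rw [mem_PhiI]
    exact Or.inl ⟨Int.natCast_nonneg s, by exact_mod_cast hs, rfl⟩

lemma low_phi {n k : ℕ} {I₁ I₂ : Finset (ℤ × ℤ)} (h₁ : I₁ ⊆ W2 k) (h₂ : I₂ ⊆ W2 (n - k)) :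
    lowOf (PhiI k I₁ I₂) k = I₁ := by
  ext ⟨a, b⟩
  unfold lowOf
  rw [Finset.mem_image]
  constructor
  · rintro ⟨⟨p1, p2⟩, hp, he⟩
    rw [Finset.mem_filter] at hp
    obtain ⟨hp, hc⟩ := hp
    simp only at hc
    rw [Prod.mk.injEq] at he
    simp only at he
    rw [mem_PhiI] at hp
    rcases hp with ⟨g1, g2, g3⟩ | ⟨⟨q1, q2⟩, hq, h3, h4⟩ | ⟨⟨q1, q2⟩, hq, h3, h4⟩
    · omega
    · simp only at h3 h4
      have : ((a, b) : ℤ × ℤ) = (q1, q2) := by rw [Prod.mk.injEq]; omega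
      rw [this]; exact hq
    · simp only at h3 h4
      have := mem_W2_mk.mp (h₂ hq)
      omega
  · intro hq
    have hqW := mem_W2_mk.mp (h₁ hq)
    refine ⟨(a, b + 1), Finset.mem_filter.mpr ⟨mem_PhiI.mpr
      (Or.inr (Or.inl ⟨(a, b), hq, rfl, rfl⟩)), by simp only; omega⟩, ?_⟩
    show ((a, b + 1 - 1) : ℤ × ℤ) = (a, b)
    rw [Prod.mk.injEq]
    exact ⟨rfl, by omega⟩

lemma high_phi {n k : ℕ} {I₁ I₂ : Finset (ℤ × ℤ)} (h₁ : I₁ ⊆ W2 k) (h₂ : I₂ ⊆ W2 (n - k)) :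
    highOf (PhiI k I₁ I₂) k = I₂ := by
  ext ⟨a, b⟩
  unfold highOf
  rw [Finset.mem_image]
  constructor
  · rintro ⟨⟨p1, p2⟩, hp, he⟩
    rw [Finset.mem_filter] at hp
    obtain ⟨hp, hc⟩ := hp
    simp only at hc
    rw [Prod.mk.injEq] at he
    simp only at he
    rw [mem_PhiI] at hp
    rcases hp with ⟨g1, g2, g3⟩ | ⟨⟨q1, q2⟩, hq, h3, h4⟩ | ⟨⟨q1, q2⟩, hq, h3, h4⟩
    · omega
    · simp only at h3 h4
      have := mem_W2_mk.mp (h₁ hq)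
      omega
    · simp only at h3 h4
      have : ((a, b) : ℤ × ℤ) = (q1, q2) := by rw [Prod.mk.injEq]; omega
      rw [this]; exact hq
  · intro hq
    have hqW := mem_W2_mk.mp (h₂ hq)
    refine ⟨(a + (k:ℤ) + 1, b), Finset.mem_filter.mpr ⟨mem_PhiI.mpr
      (Or.inr (Or.inr ⟨(a, b), hq, rfl, rfl⟩)), by simp only; omega⟩, ?_⟩
    show ((a + (k:ℤ) + 1 - (k:ℤ) - 1, b) : ℤ × ℤ) = (a, b)
    rw [Prod.mk.injEq]
    exact ⟨by omega, rfl⟩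

lemma psi_facts {n : ℕ} {I : Finset (ℤ × ℤ)} (hI : IsIdeal2 BGvec (W2 (n+1)) I) :
    kOf I ≤ n ∧ (((kOf I : ℤ), 0) ∉ I) ∧ (∀ s : ℕ, s < kOf I → ((s:ℤ), 0) ∈ I) ∧
      ∀ a b : ℤ, (a, b) ∈ I → a + b < (kOf I : ℤ) ∨ (kOf I : ℤ) < a := by
  have hex : (((n:ℤ), 0) : ℤ × ℤ) ∉ I := by
    intro h
    have := mem_W2_mk.mp (hI.1 h)
    push_cast at this
    omega
  have hne : {s : ℕ | ((s:ℤ), 0) ∉ I}.Nonempty := ⟨n, hex⟩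
  have hk1 : (((kOf I : ℤ), 0) : ℤ × ℤ) ∉ I := Nat.sInf_mem hne
  have hk2 : ∀ s : ℕ, s < kOf I → (((s:ℤ), 0) : ℤ × ℤ) ∈ I := by
    intro s hs
    have := Nat.notMem_of_lt_sInf (s := {s : ℕ | ((s:ℤ), 0) ∉ I}) hs
    simpa using this
  refine ⟨Nat.sInf_le hex, hk1, hk2, ?_⟩
  intro a b hab
  by_contra hcon
  push_neg at hcon
  obtain ⟨hc1, hc2⟩ := hcon
  have habW := mem_W2_mk.mp (hI.1 hab)
  have h1 : ((a, (kOf I : ℤ) - a) : ℤ × ℤ) ∈ I :=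
    hI.2 _ _ (le2_mk (mem_W2_mk.mpr ⟨by omega, by omega, by push_cast; omega⟩)
      (hI.1 hab) (by omega) (by omega)) hab
  have h2 : (((kOf I : ℤ), 0) : ℤ × ℤ) ∈ I :=
    hI.2 _ _ (le2_mk (mem_W2_mk.mpr ⟨by omega, by omega, by push_cast; omega⟩)
      (mem_W2_mk.mpr ⟨by omega, by omega, by push_cast; omega⟩) (by omega) (by omega)) h1
  exact hk1 h2

lemma low_isIdeal {n k : ℕ} {I : Finset (ℤ × ℤ)} (hI : IsIdeal2 BGvec (W2 (n+1)) I) :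
    IsIdeal2 BGvec (W2 k) (lowOf I k) := by
  constructor
  · rintro ⟨a, b⟩ hp
    unfold lowOf at hp
    rw [Finset.mem_image] at hp
    obtain ⟨⟨p1, p2⟩, hp, he⟩ := hp
    rw [Finset.mem_filter] at hp
    obtain ⟨hp, hc⟩ := hp
    simp only at hc
    rw [Prod.mk.injEq] at he
    simp only at he
    have := mem_W2_mk.mp (hI.1 hp)
    exact mem_W2_mk.mpr ⟨by omega, by omega, by omega⟩
  · rintro ⟨u1, u2⟩ ⟨v1, v2⟩ hle hv
    obtain ⟨hu, hvW, h1, h2⟩ := le2_char.mp hle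
    simp only at h1 h2
    have huW := mem_W2_mk.mp hu
    unfold lowOf at hv ⊢
    rw [Finset.mem_image] at hv ⊢
    obtain ⟨⟨p1, p2⟩, hp, he⟩ := hv
    rw [Finset.mem_filter] at hp
    obtain ⟨hp, hc⟩ := hp
    simp only at hc
    rw [Prod.mk.injEq] at he
    simp only at he
    have hpW := mem_W2_mk.mp (hI.1 hp)
    refine ⟨(u1, u2 + 1), Finset.mem_filter.mpr ⟨hI.2 (u1, u2 + 1) (p1, p2)
      (le2_mk (mem_W2_mk.mpr ⟨by omega, by omega, by push_cast; omega⟩) (hI.1 hp)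
        (by omega) (by omega)) hp, by simp only; omega⟩, ?_⟩
    show ((u1, u2 + 1 - 1) : ℤ × ℤ) = (u1, u2)
    rw [Prod.mk.injEq]
    exact ⟨rfl, by omega⟩

lemma high_isIdeal {n k : ℕ} {I : Finset (ℤ × ℤ)} (hI : IsIdeal2 BGvec (W2 (n+1)) I)
    (hk : k ≤ n) :
    IsIdeal2 BGvec (W2 (n - k)) (highOf I k) := by
  constructor
  · rintro ⟨a, b⟩ hp
    unfold highOf at hp
    rw [Finset.mem_image] at hp
    obtain ⟨⟨p1, p2⟩, hp, he⟩ := hp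
    rw [Finset.mem_filter] at hp
    obtain ⟨hp, hc⟩ := hp
    simp only at hc
    rw [Prod.mk.injEq] at he
    simp only at he
    have := mem_W2_mk.mp (hI.1 hp)
    exact mem_W2_mk.mpr ⟨by omega, by omega, by omega⟩
  · rintro ⟨u1, u2⟩ ⟨v1, v2⟩ hle hv
    obtain ⟨hu, hvW, h1, h2⟩ := le2_char.mp hle
    simp only at h1 h2
    have huW := mem_W2_mk.mp hu
    unfold highOf at hv ⊢
    rw [Finset.mem_image] at hv ⊢
    obtain ⟨⟨p1, p2⟩, hp, he⟩ := hv
    rw [Finset.mem_filter] at hp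
    obtain ⟨hp, hc⟩ := hp
    simp only at hc
    rw [Prod.mk.injEq] at he
    simp only at he
    have hpW := mem_W2_mk.mp (hI.1 hp)
    refine ⟨(u1 + (k:ℤ) + 1, u2), Finset.mem_filter.mpr ⟨hI.2 (u1 + (k:ℤ) + 1, u2) (p1, p2)
      (le2_mk (mem_W2_mk.mpr ⟨by omega, by omega, by push_cast; omega⟩) (hI.1 hp)
        (by omega) (by omega)) hp, by simp only; omega⟩, ?_⟩
    show ((u1 + (k:ℤ) + 1 - (k:ℤ) - 1, u2) : ℤ × ℤ) = (u1, u2)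
    rw [Prod.mk.injEq]
    exact ⟨by omega, rfl⟩

lemma phi_psi {n : ℕ} {I : Finset (ℤ × ℤ)} (hI : IsIdeal2 BGvec (W2 (n+1)) I) :
    PhiI (kOf I) (lowOf I (kOf I)) (highOf I (kOf I)) = I := by
  obtain ⟨hkn, hk1, hk2, hdiag⟩ := psi_facts hI
  ext ⟨a, b⟩
  rw [mem_PhiI]
  constructor
  · rintro (⟨h1, h2, rfl⟩ | ⟨⟨q1, q2⟩, hq, h3, h4⟩ | ⟨⟨q1, q2⟩, hq, h3, h4⟩)
    · have hmem := hk2 a.toNat (by omega)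
      have he : (((a.toNat : ℤ), 0) : ℤ × ℤ) = ((a, 0) : ℤ × ℤ) := by
        rw [Prod.mk.injEq]; omega
      rwa [he] at hmem
    · simp only at h3 h4
      unfold lowOf at hq
      rw [Finset.mem_image] at hq
      obtain ⟨⟨p1, p2⟩, hp, he⟩ := hq
      rw [Finset.mem_filter] at hp
      rw [Prod.mk.injEq] at he
      simp only at he
      have : ((a, b) : ℤ × ℤ) = (p1, p2) := by rw [Prod.mk.injEq]; omega
      rw [this]; exact hp.1
    · simp only at h3 h4
      unfold highOf at hq
      rw [Finset.mem_image] at hq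
      obtain ⟨⟨p1, p2⟩, hp, he⟩ := hq
      rw [Finset.mem_filter] at hp
      rw [Prod.mk.injEq] at he
      simp only at he
      have : ((a, b) : ℤ × ℤ) = (p1, p2) := by rw [Prod.mk.injEq]; omega
      rw [this]; exact hp.1
  · intro hab
    have habW := mem_W2_mk.mp (hI.1 hab)
    rcases hdiag a b hab with hlt | hgt
    · by_cases hb : b = 0
      · subst hb
        exact Or.inl ⟨habW.1, by omega, rfl⟩
      · refine Or.inr (Or.inl ⟨(a, b - 1), ?_, rfl, by show b = b - 1 + 1; omega⟩)
        unfold lowOf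
        rw [Finset.mem_image]
        exact ⟨(a, b), Finset.mem_filter.mpr ⟨hab, by simp only; omega⟩, rfl⟩
    · refine Or.inr (Or.inr ⟨(a - (kOf I : ℤ) - 1, b), ?_,
        by show a = a - (kOf I : ℤ) - 1 + (kOf I : ℤ) + 1; omega, rfl⟩)
      unfold highOf
      rw [Finset.mem_image]
      exact ⟨(a, b), Finset.mem_filter.mpr ⟨hab, by simp only; omega⟩, rfl⟩

lemma genF2_rec (n : ℕ) :
    genF2 BGvec (W2 (n+1)) =
      ∑ k ∈ Finset.range (n+1),
        Polynomial.X ^ k * genF2 BGvec (W2 k) * genF2 BGvec (W2 (n-k)) := by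
  have hstep : ∀ k ∈ Finset.range (n+1),
      Polynomial.X ^ k * genF2 BGvec (W2 k) * genF2 BGvec (W2 (n-k)) =
      ∑ p ∈ ideals2 BGvec (W2 k) ×ˢ ideals2 BGvec (W2 (n-k)),
        (Polynomial.X : Polynomial ℤ) ^ (k + p.1.card + p.2.card) := by
    intro k _
    rw [Finset.sum_product]
    simp only [genF2, Finset.mul_sum, Finset.sum_mul, ← pow_add]
    rw [Finset.sum_comm]
  rw [Finset.sum_congr rfl hstep, Finset.sum_sigma']
  symm
  refine Finset.sum_nbij' (fun x => PhiI x.1 x.2.1 x.2.2)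
    (fun I => ⟨kOf I, (lowOf I (kOf I), highOf I (kOf I))⟩) ?_ ?_ ?_ ?_ ?_
  · rintro ⟨k, I₁, I₂⟩ hx
    rw [Finset.mem_sigma, Finset.mem_product] at hx
    obtain ⟨hk, h1, h2⟩ := hx
    dsimp only at hk h1 h2 ⊢
    rw [Finset.mem_range] at hk
    rw [mem_ideals2] at h1 h2 ⊢
    exact phi_isIdeal (by omega) h1 h2
  · intro I hI
    rw [mem_ideals2] at hI
    rw [Finset.mem_sigma, Finset.mem_product, Finset.mem_range]
    dsimp only
    exact ⟨by have := (psi_facts hI).1; omega,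
      mem_ideals2.mpr (low_isIdeal hI), mem_ideals2.mpr (high_isIdeal hI (psi_facts hI).1)⟩
  · rintro ⟨k, I₁, I₂⟩ hx
    rw [Finset.mem_sigma, Finset.mem_product] at hx
    obtain ⟨hk, h1, h2⟩ := hx
    dsimp only at hk h1 h2 ⊢
    rw [mem_ideals2] at h1 h2
    exact Sigma.ext (kOf_phi h1.1 h2.1)
      (by rw [kOf_phi h1.1 h2.1, low_phi h1.1 h2.1, high_phi h1.1 h2.1])
  · intro I hI
    dsimp only
    rw [mem_ideals2] at hI
    exact phi_psi hI
  · rintro ⟨k, I₁, I₂⟩ hx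
    rw [Finset.mem_sigma, Finset.mem_product] at hx
    obtain ⟨hk, h1, h2⟩ := hx
    dsimp only at h1 h2 ⊢
    rw [mem_ideals2] at h1 h2
    rw [phi_card h1.1 h2.1]

lemma W2_zero : W2 0 = ∅ := by
  ext ⟨a, b⟩
  simp only [Finset.notMem_empty, iff_false, mem_W2_mk]
  omega

lemma ideals2_empty : ideals2 BGvec (∅ : Finset (ℤ × ℤ)) = {∅} := by
  ext I
  rw [mem_ideals2, Finset.mem_singleton]
  constructor
  · intro h
    exact Finset.subset_empty.mp h.1
  · rintro rfl
    exact ⟨Finset.Subset.refl _, fun u v _ hv => absurd hv (Finset.notMem_empty _)⟩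

lemma genF2_eq_qCat : ∀ n : ℕ, genF2 BGvec (W2 n) = qCat n := by
  intro n
  induction n using Nat.strong_induction_on with
  | _ n ih =>
    match n, ih with
    | 0, _ => 
      rw [genF2, W2_zero, ideals2_empty, Finset.sum_singleton, Finset.card_empty, pow_zero,
        qCat]
    | n+1, ih =>
      rw [genF2_rec n, qCat]
      rw [Finset.sum_attach (Finset.range (n+1))
        (fun k => Polynomial.X ^ k * qCat k * qCat (n - k))]
      refine Finset.sum_congr rfl fun k hk => ?_
      rw [Finset.mem_range] at hk
      rw [ih k (by omega), ih (n - k) (by omega)]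


/-- The rank generating function of `J(P_n({b,g}))` is the Carlitz–Riordan
q-Catalan polynomial `C_n(q)`. -/
theorem stmt3 (n : ℕ) (hn : 1 ≤ n) :
    genF2 BGvec (W2 n) = qCat n := genF2_eq_qCat n
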